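/- Let n ∈ ℕ, let a be an n×n complex matrix, and let k ≥ 1 be a natural number. Let M be the 2n×2n block matrix fromBlocks(|a*|, a, aᴴ, |a|), where |a| = √(aᴴ a) and |a*| = √(a aᴴ). Then trace(M^k) = 2^{k-1} · (trace(|a*|^k) + trace(|a|^k)) = 2^k · trace(|a|^k). -/

import Mathlib

/-- The positive semidefinite square root of a positive semidefinite matrix, as
`Matrix.PosSemidef.sqrt` was defined in Mathlib (December 2024); it has since been removed. -/
noncomputable def Matrix.PosSemidef.sqrt {n 𝕜 : Type*} [Fintype n] [DecidableEq n] [RCLike 𝕜]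
    [PartialOrder 𝕜]
    {A : Matrix n n 𝕜} (hA : A.PosSemidef) : Matrix n n 𝕜 :=
  (hA.isHermitian.eigenvectorUnitary : Matrix n n 𝕜) *
    Matrix.diagonal ((↑) ∘ Real.sqrt ∘ hA.isHermitian.eigenvalues) *
    (star hA.isHermitian.eigenvectorUnitary : Matrix n n 𝕜)

/-!
Write `t = |a*|` and `s = |a|`. Then `t * t = a * aᴴ`, `s * s = aᴴ * a`, and `a` intertwines them:
`t * a = a * s`, `aᴴ * t = s * aᴴ`. With these relations each block of `M * M` is twice the
corresponding block of `fromBlocks t 0 0 s * M`, whence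
`M ^ (k + 1) = 2 ^ k • fromBlocks (t ^ (k + 1)) (t ^ k * a) (s ^ k * aᴴ) (s ^ (k + 1))`.
The intertwining relations and `trace (t ^ k) = trace (s ^ k)` come from the finiteness of the
spectra: on `spectrum (a * aᴴ) ∪ spectrum (aᴴ * a)` the functions `√x` and `√x ^ k` agree with
polynomials, and for polynomials in `a * aᴴ` and `aᴴ * a` both facts are elementary.
-/

open Polynomial
open scoped ComplexOrder

theorem Polynomial.exists_eqOn_eval {K : Type*} [Field K] {s : Set K} (hs : s.Finite)
    (f : K → K) : ∃ Q : K[X], Set.EqOn f Q.eval s := by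
  classical
  exact ⟨Lagrange.interpolate hs.toFinset id f, fun _ hx =>
    (Lagrange.eval_interpolate_at_node f (Set.injOn_id _) (hs.mem_toFinset.2 hx)).symm⟩

namespace Matrix

variable {m n : Type*} [Fintype m] [Fintype n]

section Intertwining

variable {R S : Type*} [CommSemiring S] [Semiring R] [Algebra S R] [DecidableEq m] [DecidableEq n]
  {x : Matrix m n R} {A : Matrix n n R} {B : Matrix m m R}

theorem mul_pow_eq_pow_mul (h : x * A = B * x) (j : ℕ) : x * A ^ j = B ^ j * x := by
  induction j with
  | zero => simp
  | succ j ih => rw [pow_succ, ← Matrix.mul_assoc, ih, Matrix.mul_assoc, h, pow_succ,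
      Matrix.mul_assoc]

theorem mul_aeval_eq_aeval_mul (h : x * A = B * x) (Q : S[X]) :
    x * aeval A Q = aeval B Q * x := by
  simp only [aeval_eq_sum_range, Matrix.mul_sum, Matrix.sum_mul, Matrix.mul_smul, Matrix.smul_mul,
    mul_pow_eq_pow_mul h]

end Intertwining

section Trace

variable {R S : Type*} [CommSemiring S] [CommSemiring R] [Algebra S R] [DecidableEq n]

theorem trace_mul_pow_comm (x y : Matrix n n R) (j : ℕ) :
    trace ((x * y) ^ j) = trace ((y * x) ^ j) := by
  cases j with
  | zero => rfl
  | succ j =>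
    have hx : x * (y * x) ^ j = (x * y) ^ j * x :=
      mul_pow_eq_pow_mul (Matrix.mul_assoc x y x).symm j
    rw [pow_succ', pow_succ', Matrix.mul_assoc, trace_mul_comm, Matrix.mul_assoc, ← hx,
      Matrix.mul_assoc]

theorem trace_aeval_mul_comm (x y : Matrix n n R) (Q : S[X]) :
    trace (aeval (x * y) Q) = trace (aeval (y * x) Q) := by
  simp only [aeval_eq_sum_range, trace_sum, trace_smul, trace_mul_pow_comm x y]

end Trace

section Blocks

variable {R : Type*} [Semiring R]

theorem trace_fromBlocks (A : Matrix m m R) (B : Matrix m n R) (C : Matrix n m R)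
    (D : Matrix n n R) : trace (fromBlocks A B C D) = trace A + trace D := by
  simp [trace, Fintype.sum_sum_type]

theorem fromBlocks_pow_succ [DecidableEq m] [DecidableEq n] {t : Matrix m m R}
    {x : Matrix m n R} {y : Matrix n m R} {s : Matrix n n R}
    (htx : t * x = x * s) (hyt : y * t = s * y) (ht : t * t = x * y) (hs : s * s = y * x)
    (k : ℕ) : fromBlocks t x y s ^ (k + 1) =
      (2 ^ k : R) • fromBlocks (t ^ (k + 1)) (t ^ k * x) (s ^ k * y) (s ^ (k + 1)) := by
  induction k with
  | zero => simp
  | succ k ih =>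
    have hstep : fromBlocks (t ^ (k + 1)) (t ^ k * x) (s ^ k * y) (s ^ (k + 1)) *
        fromBlocks t x y s =
          (2 : R) • fromBlocks (t ^ (k + 2)) (t ^ (k + 1) * x) (s ^ (k + 1) * y) (s ^ (k + 2)) := by
      rw [fromBlocks_multiply, fromBlocks_smul]
      congr 1
      · rw [Matrix.mul_assoc, ← ht, ← Matrix.mul_assoc, ← pow_succ, ← pow_succ, ← pow_succ,
          two_smul]
      · rw [Matrix.mul_assoc, ← htx, ← Matrix.mul_assoc, ← pow_succ, two_smul]
      · rw [Matrix.mul_assoc, hyt, ← Matrix.mul_assoc, ← pow_succ, two_smul]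
      · rw [Matrix.mul_assoc, ← hs, ← Matrix.mul_assoc, ← pow_succ, ← pow_succ, two_smul]
    rw [pow_succ, ih, Matrix.smul_mul, hstep, smul_smul, ← pow_succ]

end Blocks

section FunctionalCalculus

variable {𝕜 : Type*} [RCLike 𝕜] [DecidableEq m] [DecidableEq n]

theorem IsHermitian.exists_cfc_eq_aeval_and_cfc_eq_aeval {A : Matrix n n 𝕜} {B : Matrix m m 𝕜}
    (hA : A.IsHermitian) (hB : B.IsHermitian) (f : ℝ → ℝ) :
    ∃ Q : ℝ[X], cfc f A = aeval A Q ∧ cfc f B = aeval B Q := by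
  obtain ⟨Q, hQ⟩ :=
    exists_eqOn_eval ((finite_real_spectrum (A := A)).union (finite_real_spectrum (A := B))) f
  exact ⟨Q, (cfc_congr (hQ.mono Set.subset_union_left)).trans (cfc_polynomial Q A hA),
    (cfc_congr (hQ.mono Set.subset_union_right)).trans (cfc_polynomial Q B hB)⟩

theorem mul_cfc_eq_cfc_mul {x : Matrix m n 𝕜} {A : Matrix n n 𝕜} {B : Matrix m m 𝕜}
    (hA : A.IsHermitian) (hB : B.IsHermitian) (h : x * A = B * x) (f : ℝ → ℝ) :
    x * cfc f A = cfc f B * x := by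
  obtain ⟨Q, hQA, hQB⟩ := hA.exists_cfc_eq_aeval_and_cfc_eq_aeval hB f
  rw [hQA, hQB, mul_aeval_eq_aeval_mul h]

theorem trace_cfc_mul_comm {x y : Matrix n n 𝕜} (hxy : (x * y).IsHermitian)
    (hyx : (y * x).IsHermitian) (f : ℝ → ℝ) :
    trace (cfc f (x * y)) = trace (cfc f (y * x)) := by
  obtain ⟨Q, hQxy, hQyx⟩ := hxy.exists_cfc_eq_aeval_and_cfc_eq_aeval hyx f
  rw [hQxy, hQyx, trace_aeval_mul_comm]

end FunctionalCalculus

section Sqrt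

variable {𝕜 : Type*} [RCLike 𝕜] [DecidableEq m] [DecidableEq n]

theorem PosSemidef.sqrt_eq_cfc {A : Matrix n n 𝕜} (hA : A.PosSemidef) :
    hA.sqrt = cfc Real.sqrt A := by
  rw [hA.isHermitian.cfc_eq, IsHermitian.cfc, Unitary.conjStarAlgAut_apply, PosSemidef.sqrt]

theorem PosSemidef.sqrt_mul_self {A : Matrix n n 𝕜} (hA : A.PosSemidef) :
    hA.sqrt * hA.sqrt = A := by
  have hspec : ∀ x ∈ spectrum ℝ A, Real.sqrt x * Real.sqrt x = id x := by
    rw [hA.isHermitian.spectrum_real_eq_range_eigenvalues]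
    rintro - ⟨i, rfl⟩
    exact Real.mul_self_sqrt (hA.eigenvalues_nonneg i)
  have : IsSelfAdjoint A := hA.isHermitian.isSelfAdjoint
  rw [hA.sqrt_eq_cfc, ← cfc_mul .., cfc_congr hspec, cfc_id ℝ A]

theorem sqrt_self_mul_conjTranspose_mul (a : Matrix m n 𝕜) :
    (posSemidef_self_mul_conjTranspose a).sqrt * a =
      a * (posSemidef_conjTranspose_mul_self a).sqrt := by
  rw [PosSemidef.sqrt_eq_cfc, PosSemidef.sqrt_eq_cfc]
  exact (mul_cfc_eq_cfc_mul (isHermitian_conjTranspose_mul_self a)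
    (isHermitian_mul_conjTranspose_self a) (Matrix.mul_assoc _ _ _).symm _).symm

theorem conjTranspose_mul_sqrt_self_mul_conjTranspose (a : Matrix m n 𝕜) :
    aᴴ * (posSemidef_self_mul_conjTranspose a).sqrt =
      (posSemidef_conjTranspose_mul_self a).sqrt * aᴴ := by
  rw [PosSemidef.sqrt_eq_cfc, PosSemidef.sqrt_eq_cfc]
  exact mul_cfc_eq_cfc_mul (isHermitian_mul_conjTranspose_self a)
    (isHermitian_conjTranspose_mul_self a) (Matrix.mul_assoc _ _ _).symm _

theorem trace_sqrt_self_mul_conjTranspose_pow (a : Matrix n n 𝕜) (k : ℕ) :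
    trace ((posSemidef_self_mul_conjTranspose a).sqrt ^ k) =
      trace ((posSemidef_conjTranspose_mul_self a).sqrt ^ k) := by
  rw [PosSemidef.sqrt_eq_cfc, PosSemidef.sqrt_eq_cfc,
    ← cfc_pow _ _ _ (ha := (isHermitian_mul_conjTranspose_self a).isSelfAdjoint),
    ← cfc_pow _ _ _ (ha := (isHermitian_conjTranspose_mul_self a).isSelfAdjoint)]
  exact trace_cfc_mul_comm (isHermitian_mul_conjTranspose_self a)
    (isHermitian_conjTranspose_mul_self a) _

end Sqrt

end Matrix

open Matrix ComplexOrder in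
/-- Let `a` be an `n × n` complex matrix, `k ≥ 1`, and let `M` be the
`2n × 2n` block matrix `fromBlocks |a*| a aᴴ |a|`, where `|a| = √(aᴴ a)` and
`|a*| = √(a aᴴ)`. Then `trace (M^k) = 2^(k-1) · (trace (|a*|^k) + trace (|a|^k))
= 2^k · trace (|a|^k)`. -/
theorem stmt8 (n : ℕ) (a : Matrix (Fin n) (Fin n) ℂ) (k : ℕ) (hk : 1 ≤ k) :
    ((fromBlocks (posSemidef_self_mul_conjTranspose a).sqrt a
        aᴴ (posSemidef_conjTranspose_mul_self a).sqrt) ^ k).trace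
      = 2 ^ (k - 1) * (((posSemidef_self_mul_conjTranspose a).sqrt ^ k).trace
          + ((posSemidef_conjTranspose_mul_self a).sqrt ^ k).trace) ∧
    ((fromBlocks (posSemidef_self_mul_conjTranspose a).sqrt a
        aᴴ (posSemidef_conjTranspose_mul_self a).sqrt) ^ k).trace
      = 2 ^ k * ((posSemidef_conjTranspose_mul_self a).sqrt ^ k).trace := by
  obtain ⟨j, rfl⟩ := Nat.exists_eq_add_of_le' hk
  rw [fromBlocks_pow_succ (sqrt_self_mul_conjTranspose_mul a)
      (conjTranspose_mul_sqrt_self_mul_conjTranspose a)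
      (posSemidef_self_mul_conjTranspose a).sqrt_mul_self
      (posSemidef_conjTranspose_mul_self a).sqrt_mul_self j,
    trace_smul, trace_fromBlocks, trace_sqrt_self_mul_conjTranspose_pow, Nat.add_sub_cancel,
    smul_eq_mul]
  constructor <;> ring
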